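/- arXiv:2006.01931 — 2 statements merged into one kernel-verified Lean document; each statement's English description precedes it below -/
import Mathlib

section
/- Let X ⊆ {0,1}^ℤ be a subshift and m ≥ 1 an integer with P_X(m+1) = P_X(m) + 1. Then there is exactly one word w ∈ L_m(X) such that both w0 and w1 (the words obtained by appending the letter 0, respectively 1, to w) belong to L_{m+1}(X). Moreover, if m' ≥ m and P_X(k+1) = P_X(k) + 1 for every k with m ≤ k ≤ m', and w' ∈ L_{m'}(X) is the unique word with both w'0, w'1 ∈ L_{m'+1}(X), then the rightmost subword of w' of length m equals w. -/
open MeasureTheory Filter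
open scoped ENNReal

/-- The left shift on bi-infinite binary sequences. -/
def shift (x : ℤ → Bool) : ℤ → Bool := fun n => x (n + 1)

/-- A subshift: a nonempty closed shift-invariant subset of `{0,1}^ℤ`. -/
def IsSubshift (X : Set (ℤ → Bool)) : Prop :=
  X.Nonempty ∧ IsClosed X ∧ shift '' X = X

/-- The one-sided cylinder set `[w]₀⁺` in `X` determined by a word `w`. -/
def cylinder (X : Set (ℤ → Bool)) (w : List Bool) : Set (ℤ → Bool) :=
  {x ∈ X | ∀ j : Fin w.length, x ((j : ℕ) : ℤ) = w.get j}

/-- The language of words of length `n`. -/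
def lang (X : Set (ℤ → Bool)) (n : ℕ) : Set (List Bool) :=
  {w | w.length = n ∧ (cylinder X w).Nonempty}

/-- The word complexity function. -/
noncomputable def complexity (X : Set (ℤ → Bool)) (n : ℕ) : ℕ :=
  (lang X n).ncard

/-- The two-sided orbit of a point under the shift. -/
def orbit (x : ℤ → Bool) : Set (ℤ → Bool) := {y | ∃ k : ℤ, y = fun n => x (n + k)}

/-- A minimal subshift: every orbit is dense. -/
def IsMinimalSubshift (X : Set (ℤ → Bool)) : Prop :=
  IsSubshift X ∧ ∀ x ∈ X, X ⊆ closure (orbit x)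

/-- A shift-invariant Borel probability measure supported on `X`. -/
def InvariantProbOn (X : Set (ℤ → Bool)) (μ : Measure (ℤ → Bool)) : Prop :=
  IsProbabilityMeasure μ ∧ μ Xᶜ = 0 ∧ Measure.map shift μ = μ

/-- Unique ergodicity of a subshift. -/
def UniquelyErgodic (X : Set (ℤ → Bool)) : Prop :=
  ∃! μ : Measure (ℤ → Bool), InvariantProbOn X μ

/-!
Every word of length `n` in the language has one or two right extensions, and it has two exactly
when it is right special, so `P_X(n+1) - P_X(n)` is the number of right special words of length
`n`. Since `X` is shift invariant, suffixes of right special words are right special; hence the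
suffix of length `m` of a right special `w'` is the unique right special word of length `m`.
-/

lemma mem_lang_iff {X : Set (ℤ → Bool)} {n : ℕ} {w : List Bool} :
    w ∈ lang X n ↔
      w.length = n ∧ ∃ x ∈ X, ∀ (i : ℕ) (hi : i < w.length), x i = w[i] := by
  simp [lang, _root_.cylinder, Fin.forall_iff, Set.Nonempty]

lemma lang_finite (X : Set (ℤ → Bool)) (n : ℕ) : (lang X n).Finite :=
  (List.finite_length_eq Bool n).subset fun _ hw => hw.1

lemma mem_lang_of_append_mem_lang {X : Set (ℤ → Bool)} {n : ℕ} {w : List Bool} {a : Bool}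
    (h : w ++ [a] ∈ lang X (n + 1)) : w ∈ lang X n := by
  obtain ⟨hlen, x, hx, hxw⟩ := mem_lang_iff.1 h
  refine mem_lang_iff.2 ⟨by simpa using hlen, x, hx, fun i hi => ?_⟩
  rw [hxw i (by simp only [List.length_append, List.length_singleton]; omega),
    List.getElem_append_left hi]

lemma exists_append_mem_lang {X : Set (ℤ → Bool)} {n : ℕ} {w : List Bool}
    (h : w ∈ lang X n) : ∃ a, w ++ [a] ∈ lang X (n + 1) := by
  obtain ⟨hlen, x, hx, hxw⟩ := mem_lang_iff.1 h
  refine ⟨x n, mem_lang_iff.2 ⟨by simp [hlen], x, hx, fun i hi => ?_⟩⟩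
  rcases Nat.lt_or_ge i n with hi' | hi'
  · simpa [List.getElem_append_left (hlen ▸ hi')] using hxw i (hlen ▸ hi')
  · obtain rfl : i = n := by
      simp only [List.length_append, List.length_singleton, hlen] at hi; omega
    simp [hlen]

lemma shift_iterate_apply (k : ℕ) (x : ℤ → Bool) (i : ℤ) : shift^[k] x i = x (i + k) := by
  induction k generalizing x with
  | zero => simp
  | succ k ih => rw [Function.iterate_succ_apply, ih]; simp [shift, add_assoc]

lemma IsSubshift.mapsTo_shift {X : Set (ℤ → Bool)} (hX : IsSubshift X) :
    Set.MapsTo shift X X :=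
  fun _ hx => hX.2.2 ▸ Set.mem_image_of_mem shift hx

lemma drop_mem_lang {X : Set (ℤ → Bool)} (hX : Set.MapsTo shift X X) {n : ℕ} {w : List Bool}
    (h : w ∈ lang X n) (k : ℕ) : w.drop k ∈ lang X (n - k) := by
  obtain ⟨hlen, x, hx, hxw⟩ := mem_lang_iff.1 h
  refine mem_lang_iff.2 ⟨by simp [hlen], shift^[k] x, hX.iterate k hx, fun i hi => ?_⟩
  rw [shift_iterate_apply, List.getElem_drop,
    ← hxw (k + i) (by rw [List.length_drop] at hi; omega), Nat.cast_add, add_comm]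

def followedBy (X : Set (ℤ → Bool)) (n : ℕ) (a : Bool) : Set (List Bool) :=
  {w | w ++ [a] ∈ lang X (n + 1)}

def rightSpecial (X : Set (ℤ → Bool)) (n : ℕ) : Set (List Bool) :=
  {w | w ∈ lang X n ∧ w ++ [false] ∈ lang X (n + 1) ∧ w ++ [true] ∈ lang X (n + 1)}

lemma followedBy_subset_lang (X : Set (ℤ → Bool)) (n : ℕ) (a : Bool) :
    followedBy X n a ⊆ lang X n :=
  fun _ => mem_lang_of_append_mem_lang

lemma followedBy_union (X : Set (ℤ → Bool)) (n : ℕ) :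
    followedBy X n false ∪ followedBy X n true = lang X n := by
  refine Set.union_subset (followedBy_subset_lang X n _) (followedBy_subset_lang X n _)
    |>.antisymm fun w hw => ?_
  obtain ⟨(_ | _), ha⟩ := exists_append_mem_lang hw
  exacts [Or.inl ha, Or.inr ha]

lemma followedBy_inter (X : Set (ℤ → Bool)) (n : ℕ) :
    followedBy X n false ∩ followedBy X n true = rightSpecial X n := by
  ext w
  exact ⟨fun h => ⟨mem_lang_of_append_mem_lang h.1, h⟩, fun h => h.2⟩

lemma lang_succ_eq_union (X : Set (ℤ → Bool)) (n : ℕ) :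
    lang X (n + 1) =
      (· ++ [false]) '' followedBy X n false ∪ (· ++ [true]) '' followedBy X n true := by
  refine Set.Subset.antisymm (fun v hv => ?_) ?_
  · have hne : v ≠ [] := by rintro rfl; simp [lang] at hv
    rw [← List.dropLast_append_getLast hne] at hv ⊢
    generalize v.getLast hne = a at hv ⊢
    cases a
    exacts [Or.inl ⟨_, hv, rfl⟩, Or.inr ⟨_, hv, rfl⟩]
  · rintro _ (⟨w, hw, rfl⟩ | ⟨w, hw, rfl⟩) <;> exact hw

lemma complexity_succ (X : Set (ℤ → Bool)) (n : ℕ) :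
    complexity X (n + 1) = complexity X n + (rightSpecial X n).ncard := by
  have hfin (a : Bool) : (followedBy X n a).Finite :=
    (lang_finite X n).subset (followedBy_subset_lang X n a)
  have hdisj : Disjoint ((· ++ [false]) '' followedBy X n false)
      ((· ++ [true]) '' followedBy X n true) := by
    refine Set.disjoint_left.2 ?_
    rintro _ ⟨u, -, rfl⟩ ⟨w, -, h⟩
    simpa using List.append_inj_right' h rfl
  rw [complexity, complexity, lang_succ_eq_union, Set.ncard_union_eq hdisj
      ((hfin _).image _) ((hfin _).image _),
    Set.ncard_image_of_injective _ (List.append_left_injective _),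
    Set.ncard_image_of_injective _ (List.append_left_injective _),
    ← Set.ncard_union_add_ncard_inter _ _ (hfin _) (hfin _), followedBy_union, followedBy_inter]

lemma existsUnique_mem_rightSpecial {X : Set (ℤ → Bool)} {n : ℕ}
    (h : complexity X (n + 1) = complexity X n + 1) : ∃! w, w ∈ rightSpecial X n := by
  obtain ⟨w, hw⟩ := Set.ncard_eq_one.1 (by simpa [complexity_succ] using h)
  exact ⟨w, hw ▸ rfl, fun v hv => Set.mem_singleton_iff.1 (hw ▸ hv)⟩

lemma drop_mem_rightSpecial {X : Set (ℤ → Bool)} (hX : Set.MapsTo shift X X) {n : ℕ}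
    {w : List Bool} (hw : w ∈ rightSpecial X n) {k : ℕ} (hk : k ≤ n) :
    w.drop k ∈ rightSpecial X (n - k) := by
  have hlen : k ≤ w.length := hw.1.1 ▸ hk
  obtain ⟨hw, hf, ht⟩ := hw
  have hf' := drop_mem_lang hX hf k
  have ht' := drop_mem_lang hX ht k
  rw [List.drop_append_of_le_length hlen, Nat.sub_add_comm hk] at hf' ht'
  exact ⟨drop_mem_lang hX hw k, hf', ht'⟩

theorem unique_right_special_word_general
    (X : Set (ℤ → Bool)) (hX : IsSubshift X) (m : ℕ)
    (h : complexity X (m + 1) = complexity X m + 1) :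
    (∃! w : List Bool, w ∈ lang X m ∧
        w ++ [false] ∈ lang X (m + 1) ∧ w ++ [true] ∈ lang X (m + 1)) ∧
    ∀ m' : ℕ, m ≤ m' →
      (∀ k : ℕ, m ≤ k → k ≤ m' → complexity X (k + 1) = complexity X k + 1) →
      ∀ w w' : List Bool,
        (w ∈ lang X m ∧ w ++ [false] ∈ lang X (m + 1) ∧ w ++ [true] ∈ lang X (m + 1)) →
        (w' ∈ lang X m' ∧ w' ++ [false] ∈ lang X (m' + 1) ∧
          w' ++ [true] ∈ lang X (m' + 1)) →
        w'.drop (m' - m) = w := by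
  have hEU := existsUnique_mem_rightSpecial h
  refine ⟨hEU, fun m' hmm' _ w w' hw hw' => hEU.unique ?_ hw⟩
  simpa [Nat.sub_sub_self hmm'] using drop_mem_rightSpecial hX.mapsTo_shift hw' (Nat.sub_le m' m)

/-- If `P_X(m+1) = P_X(m) + 1`, there is exactly one word `w` of length `m` in the
language of `X` such that both `w0` and `w1` are in the language; moreover if the
complexity increases by exactly one at every length between `m` and `m'`, the unique
such word `w'` of length `m'` ends with `w`. -/
theorem unique_right_special_word
    (X : Set (ℤ → Bool)) (hX : IsSubshift X) (m : ℕ) (hm : 1 ≤ m)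
    (h : complexity X (m + 1) = complexity X m + 1) :
    (∃! w : List Bool, w ∈ lang X m ∧
        w ++ [false] ∈ lang X (m + 1) ∧ w ++ [true] ∈ lang X (m + 1)) ∧
    ∀ m' : ℕ, m ≤ m' →
      (∀ k : ℕ, m ≤ k → k ≤ m' → complexity X (k + 1) = complexity X k + 1) →
      ∀ w w' : List Bool,
        (w ∈ lang X m ∧ w ++ [false] ∈ lang X (m + 1) ∧ w ++ [true] ∈ lang X (m + 1)) →
        (w' ∈ lang X m' ∧ w' ++ [false] ∈ lang X (m' + 1) ∧
          w' ++ [true] ∈ lang X (m' + 1)) →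
        w'.drop (m' - m) = w :=
  unique_right_special_word_general X hX m h
end

section
/- Let s, t ∈ {0,1}^L be distinct words of the same length L ≥ 1, and suppose there exist a word v with |v| ≤ L and an integer d with 0 ≤ d ≤ 2L − |v| such that for each pair (p,q) ∈ {s,t}×{s,t}, the word v occurs as a subword of pq exactly once, namely starting at position d. Let Y ⊆ {0,1}^ℤ be the set of all z that admit a decomposition as a bi-infinite concatenation of s and t. Then Y is a subshift, and for every positive integer n that is a multiple of 2L, the complexity satisfies L·2^{n/L} ≤ P_Y(n) ≤ 4L·2^{n/L}. -/
open MeasureTheory Filter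
open scoped ENNReal

/-- `v` occurs as a subword of `u` starting at position `i`. -/
def occursAt (v u : List Bool) (i : ℕ) : Prop :=
  i + v.length ≤ u.length ∧ (u.drop i).take v.length = v

/-- `(c, β)` is a decomposition of `z ∈ {0,1}^ℤ` as a bi-infinite concatenation of the
words `s` and `t`, each of length `L`: `0 ≤ c < L`, each `β n ∈ {s,t}`, and
`z (c + nL + r) = (β n) r` for all `n ∈ ℤ`, `0 ≤ r < L`. -/
def IsDecomp (s t : List Bool) (L : ℕ) (z : ℤ → Bool) (c : ℤ) (β : ℤ → List Bool) :
    Prop :=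
  0 ≤ c ∧ c < (L : ℤ) ∧ (∀ n : ℤ, β n = s ∨ β n = t) ∧
    ∀ (n : ℤ) (r : ℕ), r < L → z (c + n * L + r) = (β n).getD r false


/-!
Every point of `Y` has the form `concatSeq s t L c g`: an offset `c` and a sequence `g` of
binary choices between `s` and `t`, one per block. A window of length `n = M L` meets at most
`M + 1` blocks and there are `L` offsets, so `P_Y(n) ≤ L 2^(M+1)`. Conversely, the sync word `v`
occurs in such a point exactly at the positions `≡ c + d (mod L)`, so any window of length
`≥ 2L` determines the offset. Since `s` and `t` differ at some index `j₀`, each of `M` chosen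
blocks can be read off the window from its bit `j₀`, which gives `L 2^M` distinct words.
-/

section ConcatSeq

variable {s t : List Bool} {L : ℕ}

lemma exists_eq_add_mul_add (hL : 0 < L) (c i : ℤ) : ∃ k : ℤ, ∃ r < L, i = c + k * L + r := by
  have h0 := Int.emod_nonneg (i - c) (by omega : (L : ℤ) ≠ 0)
  have hlt := Int.emod_lt_of_pos (i - c) (by omega : (0 : ℤ) < L)
  refine ⟨(i - c) / L, ((i - c) % L).toNat, by omega, ?_⟩
  rw [Int.toNat_of_nonneg h0]
  linarith [Int.emod_add_ediv_mul (i - c) L]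

variable (s t L) in
def concatSeq (c : ℤ) (g : ℤ → Bool) : ℤ → Bool :=
  fun i => (if g ((i - c) / L) then s else t).getD ((i - c) % L).toNat false

lemma concatSeq_apply (c : ℤ) (g : ℤ → Bool) (k : ℤ) {r : ℕ} (hr : r < L) :
    concatSeq s t L c g (c + k * L + r) = (if g k then s else t).getD r false := by
  have hrk : c + k * L + r - c = r + k * L := by ring
  have hr' : (r : ℤ) < L := by exact_mod_cast hr
  simp only [concatSeq, hrk, Int.add_mul_ediv_right _ _ (by omega : (L : ℤ) ≠ 0),
    Int.add_mul_emod_self_right, Int.ediv_eq_zero_of_lt (by omega) hr',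
    Int.emod_eq_of_lt (by omega) hr', zero_add, Int.toNat_natCast]

lemma concatSeq_add_mul (hL : 0 < L) (c m : ℤ) (g : ℤ → Bool) :
    concatSeq s t L (c + m * L) g = concatSeq s t L c (fun k => g (k - m)) := by
  funext i
  have hi : i - (c + m * L) = i - c + (-m) * L := by ring
  simp only [concatSeq, hi, Int.add_mul_ediv_right _ _ (by omega : (L : ℤ) ≠ 0),
    Int.add_mul_emod_self_right, sub_eq_add_neg]

lemma shift_concatSeq (c : ℤ) (g : ℤ → Bool) :
    shift (concatSeq s t L c g) = concatSeq s t L (c - 1) g := by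
  funext i
  simp only [shift, concatSeq, show i + 1 - c = i - (c - 1) by ring]

lemma concatSeq_isDecomp {c : ℤ} (hc0 : 0 ≤ c) (hcL : c < L) (g : ℤ → Bool) :
    IsDecomp s t L (concatSeq s t L c g) c (fun k => if g k then s else t) :=
  ⟨hc0, hcL, fun k => by by_cases h : g k <;> simp [h], fun k _ hr => concatSeq_apply c g k hr⟩

lemma IsDecomp.eq_concatSeq {z : ℤ → Bool} {c : ℤ} {β : ℤ → List Bool}
    (h : IsDecomp s t L z c β) : z = concatSeq s t L c (fun k => decide (β k = s)) := by
  obtain ⟨hc0, hcL, hβ, hz⟩ := h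
  funext i
  obtain ⟨k, r, hr, rfl⟩ := exists_eq_add_mul_add (L := L) (by omega) c i
  rw [hz k r hr, concatSeq_apply c _ k hr]
  rcases hβ k with h | h <;> by_cases hts : t = s <;> simp [h, hts]

end ConcatSeq

section Subshift

variable (s t : List Bool) (L : ℕ)

def concatShift : Set (ℤ → Bool) := {z | ∃ c β, IsDecomp s t L z c β}

lemma concatShift_eq_range :
    concatShift s t L = Set.range fun p : Fin L × (ℤ → Bool) => concatSeq s t L p.1 p.2 := by
  ext z
  constructor
  · rintro ⟨c, β, h⟩
    refine ⟨(⟨c.toNat, by have := h.1; have := h.2.1; omega⟩, fun k => decide (β k = s)), ?_⟩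
    dsimp only
    rw [Int.toNat_of_nonneg h.1, ← h.eq_concatSeq]
  · rintro ⟨⟨c, g⟩, rfl⟩
    exact ⟨c, _, concatSeq_isDecomp (by positivity) (by exact_mod_cast c.isLt) g⟩

variable {s t L}

lemma mem_concatShift_iff (hL : 0 < L) {z : ℤ → Bool} :
    z ∈ concatShift s t L ↔ ∃ c g, z = concatSeq s t L c g := by
  rw [concatShift_eq_range]
  constructor
  · rintro ⟨⟨c, g⟩, rfl⟩
    exact ⟨c, g, rfl⟩
  · rintro ⟨c, g, rfl⟩
    have hc : c % L + c / L * L = c := Int.emod_add_ediv_mul c L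
    refine ⟨(⟨(c % L).toNat, ?_⟩, fun k => g (k - c / L)), ?_⟩
    · have := Int.emod_lt_of_pos c (by omega : (0 : ℤ) < L); omega
    · dsimp only
      rw [Int.toNat_of_nonneg (Int.emod_nonneg c (by omega)), ← concatSeq_add_mul hL, hc]

lemma continuous_concatSeq :
    Continuous fun p : Fin L × (ℤ → Bool) => concatSeq s t L p.1 p.2 := by
  refine continuous_prod_of_discrete_left.mpr fun c => continuous_pi fun i => ?_
  have : Continuous fun b : Bool => (if b then s else t).getD ((i - c) % L).toNat false :=
    continuous_of_discreteTopology
  exact this.comp (continuous_apply ((i - c) / L))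

lemma isSubshift_concatShift (hL : 0 < L) : IsSubshift (concatShift s t L) := by
  refine ⟨?_, ?_, ?_⟩
  · exact ⟨_, (mem_concatShift_iff hL).mpr ⟨0, fun _ => true, rfl⟩⟩
  · rw [concatShift_eq_range]
    exact (isCompact_range continuous_concatSeq).isClosed
  · ext z
    simp only [Set.mem_image, mem_concatShift_iff hL]
    constructor
    · rintro ⟨_, ⟨c, g, rfl⟩, rfl⟩
      exact ⟨c - 1, g, shift_concatSeq c g⟩
    · rintro ⟨c, g, rfl⟩
      exact ⟨_, ⟨c + 1, g, rfl⟩, by rw [shift_concatSeq, add_sub_cancel_right]⟩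

end Subshift

section Language

def window (z : ℤ → Bool) (n : ℕ) : List Bool := List.ofFn fun i : Fin n => z i

lemma window_eq_window_iff {z z' : ℤ → Bool} {n : ℕ} :
    window z n = window z' n ↔ ∀ i : ℤ, 0 ≤ i → i < n → z i = z' i := by
  simp only [window, List.ofFn_inj, funext_iff, Fin.forall_iff]
  constructor
  · intro h i hi0 hin
    simpa [Int.toNat_of_nonneg hi0] using h i.toNat (by omega)
  · exact fun h i hin => h i (by positivity) (by exact_mod_cast hin)

lemma lang_eq_image (X : Set (ℤ → Bool)) (n : ℕ) : lang X n = (window · n) '' X := by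
  ext w
  constructor
  · rintro ⟨rfl, z, hz, hzw⟩
    exact ⟨z, hz, List.ext_get (by simp [window]) fun i _ hi => by simpa [window] using hzw ⟨i, hi⟩⟩
  · rintro ⟨z, hz, rfl⟩
    exact ⟨by simp [window], z, hz, fun j => by rw [List.get_eq_getElem]; simp [window]⟩

end Language

section UpperBound

variable {s t : List Bool} {L : ℕ}

lemma window_concatSeq_congr {c : ℤ} (hc0 : 0 ≤ c) (hcL : c < L) {M n : ℕ} (hn : n ≤ M * L)
    {g g' : ℤ → Bool} (h : ∀ k : ℤ, -1 ≤ k → k < M → g k = g' k) :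
    window (concatSeq s t L c g) n = window (concatSeq s t L c g') n := by
  refine window_eq_window_iff.mpr fun i hi0 hin => ?_
  have hL : (0 : ℤ) < L := by omega
  have hn' : (n : ℤ) ≤ M * L := by exact_mod_cast hn
  have hlo : -1 ≤ (i - c) / L := Int.le_ediv_of_mul_le hL (by linarith)
  have hhi : (i - c) / L < M := Int.ediv_lt_of_lt_mul hL (by linarith)
  simp only [concatSeq, h _ hlo hhi]

lemma complexity_concatShift_le {M n : ℕ} (hn : n ≤ M * L) :
    complexity (concatShift s t L) n ≤ L * 2 ^ (M + 1) := by
  have hemb : Function.Injective fun j : Fin (M + 1) => (j : ℤ) - 1 :=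
    fun a b h => Fin.ext (by simpa using h)
  let F : Fin L × (Fin (M + 1) → Bool) → List Bool := fun p =>
    window (concatSeq s t L p.1 (Function.extend (fun j : Fin (M + 1) => (j : ℤ) - 1) p.2
      fun _ => false)) n
  have hsub : lang (concatShift s t L) n ⊆ Set.range F := by
    rw [lang_eq_image, concatShift_eq_range]
    rintro _ ⟨_, ⟨⟨c, g⟩, rfl⟩, rfl⟩
    refine ⟨(c, fun j => g ((j : ℤ) - 1)),
      window_concatSeq_congr (by positivity) (by exact_mod_cast c.isLt) hn fun k hk1 hkM => ?_⟩
    obtain ⟨j, rfl⟩ : ∃ j : Fin (M + 1), (j : ℤ) - 1 = k := ⟨⟨(k + 1).toNat, by omega⟩, by simp; omega⟩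
    exact hemb.extend_apply _ _ j
  calc complexity (concatShift s t L) n ≤ (Set.range F).ncard :=
        Set.ncard_le_ncard hsub (Set.finite_range F)
    _ ≤ Nat.card (Fin L × (Fin (M + 1) → Bool)) := by
        rw [← Set.image_univ, ← Set.ncard_univ]; exact Set.ncard_image_le Set.finite_univ
    _ = L * 2 ^ (M + 1) := by simp

end UpperBound

section Synchronization

def IsSyncWord (s t v : List Bool) (d : ℕ) : Prop :=
  ∀ p q : List Bool, (p = s ∨ p = t) → (q = s ∨ q = t) →
    occursAt v (p ++ q) d ∧ ∀ i : ℕ, occursAt v (p ++ q) i → i = d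

def MatchesAt (v : List Bool) (z : ℤ → Bool) (p : ℤ) : Prop :=
  ∀ j < v.length, z (p + j) = v.getD j false

lemma occursAt_iff_getD (v u : List Bool) (i : ℕ) :
    occursAt v u i ↔
      i + v.length ≤ u.length ∧ ∀ j < v.length, u.getD (i + j) false = v.getD j false := by
  refine and_congr_right fun hi => ?_
  rw [List.ext_getElem_iff]
  simp only [List.length_take, List.length_drop, List.getElem_take, List.getElem_drop]
  constructor
  · rintro ⟨-, h⟩ j hj
    rw [List.getD_eq_getElem _ _ (by omega), List.getD_eq_getElem _ _ hj, ← h j (by omega) hj]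
  · refine fun h => ⟨by omega, fun j hj hjv => ?_⟩
    have := h j hjv
    rwa [List.getD_eq_getElem _ _ (by omega), List.getD_eq_getElem _ _ hjv] at this

variable {s t v : List Bool} {L d : ℕ}

lemma length_ite (hs : s.length = L) (ht : t.length = L) (b : Bool) :
    (if b then s else t).length = L := by
  cases b <;> simpa

lemma concatSeq_apply_pair (hs : s.length = L) (ht : t.length = L) (c : ℤ) (g : ℤ → Bool)
    (k : ℤ) {j : ℕ} (hj : j < 2 * L) :
    concatSeq s t L c g (c + k * L + j) =
      ((if g k then s else t) ++ (if g (k + 1) then s else t)).getD j false := by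
  rcases lt_or_ge j L with hjL | hjL
  · rw [List.getD_append _ _ _ _ (by rwa [length_ite hs ht]), concatSeq_apply c g k hjL]
  · have hpos : c + k * L + j = c + (k + 1) * L + ((j - L : ℕ) : ℤ) := by
      push_cast [Nat.cast_sub hjL]; ring
    rw [hpos, concatSeq_apply c g (k + 1) (by omega),
      List.getD_append_right _ _ _ _ (by rwa [length_ite hs ht]), length_ite hs ht]

lemma matchesAt_concatSeq_iff_occursAt (hs : s.length = L) (ht : t.length = L) (c : ℤ)
    (g : ℤ → Bool) (k : ℤ) {e : ℕ} (he : e + v.length ≤ 2 * L) :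
    MatchesAt v (concatSeq s t L c g) (c + k * L + e) ↔
      occursAt v ((if g k then s else t) ++ (if g (k + 1) then s else t)) e := by
  rw [occursAt_iff_getD, List.length_append, length_ite hs ht, length_ite hs ht,
    and_iff_right (by omega)]
  refine forall₂_congr fun j hj => ?_
  rw [← concatSeq_apply_pair hs ht c g k (by omega)]
  push_cast
  ring_nf

lemma matchesAt_concatSeq_iff (hL : 0 < L) (hs : s.length = L) (ht : t.length = L)
    (hv : v.length ≤ L) (hsync : IsSyncWord s t v d) (c : ℤ) (g : ℤ → Bool) (p : ℤ) :
    MatchesAt v (concatSeq s t L c g) p ↔ p ≡ c + d [ZMOD L] := by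
  have hblock : ∀ k, (if g k then s else t) = s ∨ (if g k then s else t) = t := fun k => by
    cases g k <;> simp
  constructor
  · intro h
    obtain ⟨k, e, he, rfl⟩ := exists_eq_add_mul_add hL c p
    rw [matchesAt_concatSeq_iff_occursAt hs ht c g k (by omega)] at h
    rw [(hsync _ _ (hblock k) (hblock (k + 1))).2 e h]
    exact Int.modEq_iff_dvd.mpr ⟨-k, by ring⟩
  · intro h
    obtain ⟨m, hm⟩ := Int.modEq_iff_dvd.mp h
    have hocc := (hsync _ _ (hblock (-m)) (hblock (-m + 1))).1
    have hd := hocc.1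
    rw [List.length_append, length_ite hs ht, length_ite hs ht] at hd
    rw [show p = c + -m * L + d by linarith,
      matchesAt_concatSeq_iff_occursAt hs ht c g (-m) (by omega)]
    exact hocc

lemma IsSyncWord.modEq_of_window_eq (hsync : IsSyncWord s t v d) (hL : 0 < L)
    (hs : s.length = L) (ht : t.length = L) (hv : v.length ≤ L) {n : ℕ} (hn : 2 * L ≤ n)
    {c c' : ℤ} {g g' : ℤ → Bool}
    (h : window (concatSeq s t L c g) n = window (concatSeq s t L c' g') n) :
    c ≡ c' [ZMOD L] := by
  -- the first complete occurrence of the sync word lies inside the common window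
  set p := (c + d) % L
  have hp : p ≡ c + d [ZMOD L] := Int.emod_emod _ _
  have hp0 : 0 ≤ p := Int.emod_nonneg _ (by omega)
  have hpL : p < L := Int.emod_lt_of_pos _ (by omega)
  have hmatch := (matchesAt_concatSeq_iff hL hs ht hv hsync c g p).mpr hp
  have hmatch' : MatchesAt v (concatSeq s t L c' g') p := fun j hj => by
    rw [← window_eq_window_iff.mp h (p + j) (by omega) (by omega)]
    exact hmatch j hj
  exact Int.ModEq.add_right_cancel' d
    (hp.symm.trans ((matchesAt_concatSeq_iff hL hs ht hv hsync c' g' p).mp hmatch'))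

end Synchronization

section LowerBound

variable {s t v : List Bool} {L d : ℕ}

lemma exists_getD_ne (hs : s.length = L) (ht : t.length = L) (hst : s ≠ t) :
    ∃ j < L, s.getD j false ≠ t.getD j false := by
  by_contra! h
  refine hst (List.ext_getElem (by omega) fun j hjs hjt => ?_)
  have := h j (by omega)
  rwa [List.getD_eq_getElem _ _ hjs, List.getD_eq_getElem _ _ hjt] at this

lemma eq_of_concatSeq_apply_eq {j₀ : ℕ} (hj₀L : j₀ < L)
    (hj₀ : s.getD j₀ false ≠ t.getD j₀ false) {c k : ℤ} {g g' : ℤ → Bool}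
    (h : concatSeq s t L c g (c + k * L + j₀) = concatSeq s t L c g' (c + k * L + j₀)) :
    g k = g' k := by
  rw [concatSeq_apply c g k hj₀L, concatSeq_apply c g' k hj₀L] at h
  cases hk : g k <;> cases hk' : g' k <;>
    simp only [hk, hk', Bool.false_eq_true, ↓reduceIte] at h
  all_goals first | rfl | exact absurd h hj₀ | exact absurd h.symm hj₀

lemma le_complexity_concatShift (hL : 0 < L) (hs : s.length = L) (ht : t.length = L)
    (hst : s ≠ t) (hv : v.length ≤ L) (hsync : IsSyncWord s t v d) {M n : ℕ} (hM : 2 ≤ M)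
    (hn : M * L ≤ n) :
    L * 2 ^ M ≤ complexity (concatShift s t L) n := by
  obtain ⟨j₀, hj₀L, hj₀⟩ := exists_getD_ne hs ht hst
  -- block `j` is placed at index `e c` so that its distinguishing bit lands at
  -- `(c + j₀) % L + j * L`, inside the window
  let e (c : ℤ) : ℤ := (c + j₀) / L
  have hemb (c : ℤ) : Function.Injective fun j : Fin M => (j : ℤ) - e c :=
    fun a b h => Fin.ext (by simpa using h)
  let G : Fin L × (Fin M → Bool) → List Bool := fun p =>
    window (concatSeq s t L p.1
      (Function.extend (fun j : Fin M => (j : ℤ) - e p.1) p.2 fun _ => false)) n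
  have hG : Function.Injective G := by
    rintro ⟨c, b⟩ ⟨c', b'⟩ h
    obtain rfl : c = c' := by
      have hmod := hsync.modEq_of_window_eq hL hs ht hv (by nlinarith) h
      rw [Int.ModEq, Int.emod_eq_of_lt (by positivity) (by exact_mod_cast c.isLt),
        Int.emod_eq_of_lt (by positivity) (by exact_mod_cast c'.isLt)] at hmod
      exact Fin.ext (by exact_mod_cast hmod)
    refine Prod.ext rfl (funext fun j => ?_)
    have hpos : (c : ℤ) + ((j : ℤ) - e c) * L + j₀ = (c + j₀) % L + j * L := by
      linear_combination -(Int.emod_add_ediv_mul ((c : ℤ) + j₀) L)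
    have hr0 := Int.emod_nonneg ((c : ℤ) + j₀) (by omega : (L : ℤ) ≠ 0)
    have hrL := Int.emod_lt_of_pos ((c : ℤ) + j₀) (by omega : (0 : ℤ) < L)
    have hjM : ((j : ℤ) + 1) * L ≤ M * L := by gcongr; exact_mod_cast j.isLt
    have hnz : (M : ℤ) * L ≤ n := by exact_mod_cast hn
    have hbit := window_eq_window_iff.mp h ((c : ℤ) + ((j : ℤ) - e c) * L + j₀)
      (by rw [hpos]; positivity) (by rw [hpos]; linarith)
    simpa [(hemb c).extend_apply] using eq_of_concatSeq_apply_eq hj₀L hj₀ hbit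
  have hsub : Set.range G ⊆ lang (concatShift s t L) n := by
    rw [lang_eq_image, concatShift_eq_range]
    rintro _ ⟨p, rfl⟩
    exact ⟨_, ⟨(p.1, _), rfl⟩, rfl⟩
  calc L * 2 ^ M = Nat.card (Fin L × (Fin M → Bool)) := by simp
    _ = (Set.range G).ncard := (Set.ncard_range_of_injective hG).symm
    _ ≤ complexity (concatShift s t L) n := Set.ncard_le_ncard hsub (lang_finite _ _)

end LowerBound

theorem concatenation_shift_complexity_general
    (L : ℕ) (hL : 1 ≤ L) (s t : List Bool)
    (hs : s.length = L) (ht : t.length = L) (hst : s ≠ t)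
    (v : List Bool) (d : ℕ) (hv : v.length ≤ L)
    (hocc : ∀ p q : List Bool, (p = s ∨ p = t) → (q = s ∨ q = t) →
      occursAt v (p ++ q) d ∧ ∀ i : ℕ, occursAt v (p ++ q) i → i = d) :
    IsSubshift {z | ∃ c β, IsDecomp s t L z c β} ∧
    ∀ n : ℕ, 0 < n → 2 * L ∣ n →
      L * 2 ^ (n / L) ≤ complexity {z | ∃ c β, IsDecomp s t L z c β} n ∧
      complexity {z | ∃ c β, IsDecomp s t L z c β} n ≤ 4 * L * 2 ^ (n / L) := by
  refine ⟨isSubshift_concatShift hL, fun n hn hdvd => ?_⟩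
  obtain ⟨q, rfl⟩ := hdvd
  have hM : 2 * L * q / L = 2 * q := by
    rw [mul_comm 2 L, mul_assoc, Nat.mul_div_cancel_left _ hL]
  have hq : 1 ≤ q := Nat.pos_of_mul_pos_left hn
  rw [hM]
  refine ⟨le_complexity_concatShift hL hs ht hst hv hocc (by omega) (le_of_eq (by ring)), ?_⟩
  calc complexity (concatShift s t L) (2 * L * q) ≤ L * 2 ^ (2 * q + 1) :=
        complexity_concatShift_le (le_of_eq (by ring))
    _ ≤ 4 * L * 2 ^ (2 * q) := by rw [pow_succ]; linarith [Nat.zero_le (L * 2 ^ (2 * q))]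

/-- Under the unique-decipherability hypotheses on `s` and `t`, the set `Y` of all
bi-infinite concatenations of `s` and `t` is a subshift whose complexity satisfies
`L·2^{n/L} ≤ P_Y(n) ≤ 4L·2^{n/L}` whenever `n` is a positive multiple of `2L`. -/
theorem concatenation_shift_complexity
    (L : ℕ) (hL : 1 ≤ L) (s t : List Bool)
    (hs : s.length = L) (ht : t.length = L) (hst : s ≠ t)
    (v : List Bool) (d : ℕ) (hv : v.length ≤ L) (hd : d + v.length ≤ 2 * L)
    (hocc : ∀ p q : List Bool, (p = s ∨ p = t) → (q = s ∨ q = t) →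
      occursAt v (p ++ q) d ∧ ∀ i : ℕ, occursAt v (p ++ q) i → i = d) :
    IsSubshift {z | ∃ c β, IsDecomp s t L z c β} ∧
    ∀ n : ℕ, 0 < n → 2 * L ∣ n →
      L * 2 ^ (n / L) ≤ complexity {z | ∃ c β, IsDecomp s t L z c β} n ∧
      complexity {z | ∃ c β, IsDecomp s t L z c β} n ≤ 4 * L * 2 ^ (n / L) :=
  concatenation_shift_complexity_general L hL s t hs ht hst v d hv hocc
end
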